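/- (Homogeneous linear estimate, Schrödinger.) For every k ∈ ℝ there exists a constant C > 0 such that for every u₀ ∈ H^k(𝕋, ℂ), ‖ψ(t) U(t) u₀‖_{X^k} ≤ C ‖u₀‖_{H^k}. -/

import Mathlib

open MeasureTheory Set
open scoped Real

noncomputable section

instance : Fact (0 < 2 * π) := ⟨by positivity⟩

/-- The circle `𝕋 = ℝ/2πℤ`. -/
abbrev Torus := AddCircle (2 * π)

/-- Japanese bracket `⟨x⟩ = 1 + |x|`. -/
def jb (x : ℝ) : ℝ := 1 + |x|

/-- Space-time Fourier transform `f̂(n,τ)` of a function on `𝕋 × ℝ`. -/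
def stFT (f : Torus × ℝ → ℂ) (n : ℤ) (τ : ℝ) : ℂ :=
  ∫ t : ℝ, Complex.exp (-(Complex.I * τ * t)) * fourierCoeff (fun x : Torus => f (x, t)) n

/-- Bourgain norm `X^{k,b}` adapted to the Schrödinger dispersion `τ = -n²`. -/
def Xnorm (k b : ℝ) (f : Torus × ℝ → ℂ) : ℝ :=
  (∫ τ : ℝ, ∑' n : ℤ, jb (n : ℝ) ^ (2 * k) * jb (τ + (n : ℝ) ^ 2) ^ (2 * b) * ‖stFT f n τ‖ ^ 2) ^ (1/2 : ℝ)

/-- Bourgain norm `Y^{s,b}` adapted to the Airy dispersion `τ = n³`. -/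
def Ynorm (s b : ℝ) (g : Torus × ℝ → ℂ) : ℝ :=
  (∫ τ : ℝ, ∑' n : ℤ, jb (n : ℝ) ^ (2 * s) * jb (τ - (n : ℝ) ^ 3) ^ (2 * b) * ‖stFT g n τ‖ ^ 2) ^ (1/2 : ℝ)

/-- Bourgain norm with general dispersion relation `τ = h(n)`. -/
def XHnorm (h : ℤ → ℝ) (s b : ℝ) (f : Torus × ℝ → ℂ) : ℝ :=
  (∫ τ : ℝ, ∑' n : ℤ, jb (n : ℝ) ^ (2 * s) * jb (τ - h n) ^ (2 * b) * ‖stFT f n τ‖ ^ 2) ^ (1/2 : ℝ)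

/-- `‖⟨n⟩^k f̂(n,τ)‖_{L²_n L¹_τ}`. -/
def XLL (k : ℝ) (f : Torus × ℝ → ℂ) : ℝ :=
  (∑' n : ℤ, (jb (n : ℝ) ^ k * ∫ τ : ℝ, ‖stFT f n τ‖) ^ 2) ^ (1/2 : ℝ)

/-- `‖⟨n⟩^k f̂(n,τ)/⟨τ+n²⟩‖_{L²_n L¹_τ}`. -/
def ZLL (k : ℝ) (f : Torus × ℝ → ℂ) : ℝ :=
  (∑' n : ℤ, (jb (n : ℝ) ^ k * ∫ τ : ℝ, ‖stFT f n τ‖ / jb (τ + (n : ℝ) ^ 2)) ^ 2) ^ (1/2 : ℝ)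

/-- `‖⟨n⟩^s ĝ(n,τ)/⟨τ-n³⟩‖_{L²_n L¹_τ}`. -/
def WLL (s : ℝ) (g : Torus × ℝ → ℂ) : ℝ :=
  (∑' n : ℤ, (jb (n : ℝ) ^ s * ∫ τ : ℝ, ‖stFT g n τ‖ / jb (τ - (n : ℝ) ^ 3)) ^ 2) ^ (1/2 : ℝ)

/-- The norm `‖f‖_{X^k} = ‖f‖_{X^{k,1/2}} + ‖⟨n⟩^k f̂‖_{L²_n L¹_τ}`. -/
def XkNorm (k : ℝ) (f : Torus × ℝ → ℂ) : ℝ := Xnorm k (1/2) f + XLL k f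

/-- The companion norm `‖f‖_{Z^k}`. -/
def ZkNorm (k : ℝ) (f : Torus × ℝ → ℂ) : ℝ := Xnorm k (-(1/2)) f + ZLL k f

/-- The norm `‖g‖_{Y^s} = ‖g‖_{Y^{s,1/2}} + ‖⟨n⟩^s ĝ‖_{L²_n L¹_τ}`. -/
def YsNorm (s : ℝ) (g : Torus × ℝ → ℂ) : ℝ := Ynorm s (1/2) g + XLL s g

/-- The companion norm `‖g‖_{W^s}`. -/
def WsNorm (s : ℝ) (g : Torus × ℝ → ℂ) : ℝ := Ynorm s (-(1/2)) g + WLL s g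

/-- Sobolev norm `‖u‖_{H^s}` on the torus. -/
def SobNorm (s : ℝ) (u : Torus → ℂ) : ℝ :=
  (∑' n : ℤ, jb (n : ℝ) ^ (2 * s) * ‖fourierCoeff u n‖ ^ 2) ^ (1/2 : ℝ)

/-- Membership in `H^s(𝕋)`. -/
def MemSob (s : ℝ) (u : Torus → ℂ) : Prop :=
  Summable fun n : ℤ => jb (n : ℝ) ^ (2 * s) * ‖fourierCoeff u n‖ ^ 2

/-- Complexification of a real-valued function on the torus. -/
def cx (g : Torus → ℝ) : Torus → ℂ := fun x => (g x : ℂ)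

/-- The free Schrödinger group: `(U(t)u₀)^(n) = e^{-in²t} û₀(n)`. -/
def Ugrp (t : ℝ) (u₀ : Torus → ℂ) : Torus → ℂ := fun x =>
  ∑' n : ℤ, Complex.exp (-(Complex.I * (n : ℂ) ^ 2 * t)) * fourierCoeff u₀ n * fourier n x

/-- The free Airy group: `(V(t)v₀)^(n) = e^{in³t} v̂₀(n)`. -/
def Vgrp (t : ℝ) (v₀ : Torus → ℂ) : Torus → ℂ := fun x =>
  ∑' n : ℤ, Complex.exp (Complex.I * (n : ℂ) ^ 3 * t) * fourierCoeff v₀ n * fourier n x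

/-- The spatial derivative `∂ₓ` on the torus, via Fourier series. -/
def pd (g : Torus → ℂ) : Torus → ℂ := fun x =>
  ∑' n : ℤ, Complex.I * (n : ℂ) * fourierCoeff g n * fourier n x

/-- `ψ` is a smooth non-negative bump, supported in `[-2,2]`, equal to `1` on `[-1,1]`. -/
def IsBump (ψ : ℝ → ℝ) : Prop :=
  ContDiff ℝ (⊤ : ℕ∞) ψ ∧ (∀ t, 0 ≤ ψ t) ∧ Function.support ψ ⊆ Icc (-2 : ℝ) 2 ∧
    ∀ t ∈ Icc (-1 : ℝ) 1, ψ t = 1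

/-- `m` is a smooth non-negative symbol with `m = 1` on `|ξ| ≤ 1` and `m = |ξ|⁻¹` on `|ξ| ≥ 2`. -/
def IsSymbol (m : ℝ → ℝ) : Prop :=
  ContDiff ℝ (⊤ : ℕ∞) m ∧ (∀ ξ, 0 ≤ m ξ) ∧ (∀ ξ : ℝ, |ξ| ≤ 1 → m ξ = 1) ∧
    ∀ ξ : ℝ, 2 ≤ |ξ| → m ξ = |ξ|⁻¹

/-- The `I`-operator `I = I_N^{1-s}`: Fourier multiplier with symbol `m(n/N)^{1-s}`. -/
def Iop (m : ℝ → ℝ) (N s : ℝ) (f : Torus → ℂ) : Torus → ℂ := fun x =>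
  ∑' n : ℤ, ((m ((n : ℝ) / N) ^ (1 - s) : ℝ) : ℂ) * fourierCoeff f n * fourier n x

/-- The `I`-operator acting on real-valued functions. -/
def IopR (m : ℝ → ℝ) (N s : ℝ) (f : Torus → ℝ) : Torus → ℝ := fun x =>
  (Iop m N s (cx f) x).re

/-- `L⁴` norm on `𝕋 × ℝ`. -/
def L4norm (f : Torus × ℝ → ℂ) : ℝ := (∫ p : Torus × ℝ, ‖f p‖ ^ 4) ^ (1/4 : ℝ)

/-- The conserved mass `M(u) = ‖u‖_{L²}`. -/
def Mfun (u : Torus → ℂ) : ℝ := (∫ x : Torus, ‖u x‖ ^ 2) ^ (1/2 : ℝ)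

/-- The conserved functional `L(u,v) = α‖v‖_{L²}² + 2γ∫ Im(u ∂ₓū)`. -/
def Lfun (α γ : ℝ) (u : Torus → ℂ) (v : Torus → ℝ) : ℝ :=
  α * (∫ x : Torus, v x ^ 2) +
    2 * γ * ∫ x : Torus, (u x * pd (fun y => (starRingEnd ℂ) (u y)) x).im

/-- The energy functional `E(u,v)`. -/
def Efun (α β γ : ℝ) (u : Torus → ℂ) (v : Torus → ℝ) : ℝ :=
  α * γ * (∫ x : Torus, v x * ‖u x‖ ^ 2) + γ * (∫ x : Torus, ‖pd u x‖ ^ 2) +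
    (α / 2) * (∫ x : Torus, ‖pd (cx v) x‖ ^ 2) - (α / 6) * (∫ x : Torus, v x ^ 3) +
    (β * γ / 2) * ∫ x : Torus, ‖u x‖ ^ 4

/-- Duhamel formulation of the Schrödinger equation of the NLS-KdV system at time `t`:
`u(t) = U(t)u₀ - i∫₀ᵗ U(t-t')(α u v + β|u|²u)(t') dt'`. -/
def DuhamelU (α β : ℝ) (u : ℝ → Torus → ℂ) (v : ℝ → Torus → ℝ) (u₀ : Torus → ℂ)
    (t : ℝ) : Prop :=
  ∀ x : Torus,
    u t x = Ugrp t u₀ x - Complex.I * ∫ t' in (0 : ℝ)..t,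
      Ugrp (t - t')
        (fun y => (α : ℂ) * u t' y * ((v t' y : ℝ) : ℂ) +
          (β : ℂ) * ((‖u t' y‖ ^ 2 : ℝ) : ℂ) * u t' y) x

/-- Duhamel formulation of the KdV equation of the NLS-KdV system at time `t`:
`v(t) = V(t)v₀ - ∫₀ᵗ V(t-t')((1/2)∂ₓ(v²) - γ∂ₓ(|u|²))(t') dt'`. -/
def DuhamelV (γ : ℝ) (u : ℝ → Torus → ℂ) (v : ℝ → Torus → ℝ) (v₀ : Torus → ℝ)
    (t : ℝ) : Prop :=
  ∀ x : Torus,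
    ((v t x : ℝ) : ℂ) = Vgrp t (cx v₀) x - ∫ t' in (0 : ℝ)..t,
      Vgrp (t - t')
        (fun y => (1/2 : ℂ) * pd (fun z => (cx (v t') z) ^ 2) y -
          (γ : ℂ) * pd (fun z => ((‖u t' z‖ ^ 2 : ℝ) : ℂ)) y) x

/-- Continuity of `t ↦ u(t)` as a map into `H^s(𝕋)` on the set `J`. -/
def ContInSob (s : ℝ) (u : ℝ → Torus → ℂ) (J : Set ℝ) : Prop :=
  ∀ t ∈ J, ∀ ε > 0, ∃ η > 0, ∀ t' ∈ J, |t' - t| < η →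
    SobNorm s (fun x => u t' x - u t x) < ε

/-- Restricted Bourgain norm `X^{k,b}(J)` for a curve `u : ℝ → 𝕋 → ℂ`. -/
def XnormRes (k b : ℝ) (u : ℝ → Torus → ℂ) (J : Set ℝ) : ℝ :=
  sInf {r | ∃ g : Torus × ℝ → ℂ, (∀ t ∈ J, ∀ x, g (x, t) = u t x) ∧ r = Xnorm k b g}

/-- Restricted Bourgain norm `Y^{s,b}(J)`. -/
def YnormRes (s b : ℝ) (u : ℝ → Torus → ℂ) (J : Set ℝ) : ℝ :=
  sInf {r | ∃ g : Torus × ℝ → ℂ, (∀ t ∈ J, ∀ x, g (x, t) = u t x) ∧ r = Ynorm s b g}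

/-- Restricted norm `X^k(J)`. -/
def XkRes (k : ℝ) (u : ℝ → Torus → ℂ) (J : Set ℝ) : ℝ :=
  sInf {r | ∃ g : Torus × ℝ → ℂ, (∀ t ∈ J, ∀ x, g (x, t) = u t x) ∧ r = XkNorm k g}

/-- Restricted norm `Y^s(J)`. -/
def YsRes (s : ℝ) (u : ℝ → Torus → ℂ) (J : Set ℝ) : ℝ :=
  sInf {r | ∃ g : Torus × ℝ → ℂ, (∀ t ∈ J, ∀ x, g (x, t) = u t x) ∧ r = YsNorm s g}

/-- Finiteness of the `X^k` norm of an extension of `u` off `𝕋 × J`. -/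
def FinXkOn (k : ℝ) (u : ℝ → Torus → ℂ) (J : Set ℝ) : Prop :=
  ∃ g : Torus × ℝ → ℂ, (∀ t ∈ J, ∀ x, g (x, t) = u t x) ∧
    Integrable (fun τ : ℝ =>
      ∑' n : ℤ, jb (n : ℝ) ^ (2 : ℝ) * jb (τ + (n : ℝ) ^ 2) ^ (2 * (1/2 : ℝ)) * ‖stFT g n τ‖ ^ 2) ∧
    Summable (fun n : ℤ => (jb (n : ℝ) ^ k * ∫ τ : ℝ, ‖stFT g n τ‖) ^ 2)

/-- Finiteness of the `Y^s` norm of an extension of `u` off `𝕋 × J`. -/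
def FinYsOn (s : ℝ) (u : ℝ → Torus → ℂ) (J : Set ℝ) : Prop :=
  ∃ g : Torus × ℝ → ℂ, (∀ t ∈ J, ∀ x, g (x, t) = u t x) ∧
    Integrable (fun τ : ℝ =>
      ∑' n : ℤ, jb (n : ℝ) ^ (2 * s) * jb (τ - (n : ℝ) ^ 3) ^ (2 * (1/2 : ℝ)) * ‖stFT g n τ‖ ^ 2) ∧
    Summable (fun n : ℤ => (jb (n : ℝ) ^ s * ∫ τ : ℝ, ‖stFT g n τ‖) ^ 2)

/-- Joint smoothness of a space-time function (through the covering `ℝ × ℝ → ℝ × 𝕋`). -/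
def SmoothC (u : ℝ → Torus → ℂ) : Prop :=
  ContDiff ℝ (⊤ : ℕ∞) fun p : ℝ × ℝ => u p.1 ((p.2 : ℝ) : Torus)

/-- Joint smoothness of a real space-time function. -/
def SmoothR (v : ℝ → Torus → ℝ) : Prop :=
  ContDiff ℝ (⊤ : ℕ∞) fun p : ℝ × ℝ => v p.1 ((p.2 : ℝ) : Torus)

/-- `(u,v)` solves the NLS-KdV system pointwise on the time set `J`:
`i∂ₜu + ∂ₓ²u = αuv + β|u|²u`, `∂ₜv + ∂ₓ³v + (1/2)∂ₓ(v²) = γ∂ₓ(|u|²)`. -/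
def SolvesNLSKdV (α β γ : ℝ) (u : ℝ → Torus → ℂ) (v : ℝ → Torus → ℝ) (J : Set ℝ) : Prop :=
  ∀ t ∈ J, ∀ x : Torus,
    (Complex.I * deriv (fun r => u r x) t + pd (pd (u t)) x =
      (α : ℂ) * u t x * ((v t x : ℝ) : ℂ) + (β : ℂ) * ((‖u t x‖ ^ 2 : ℝ) : ℂ) * u t x) ∧
    (((deriv (fun r => v r x) t : ℝ) : ℂ) + pd (pd (pd (cx (v t)))) x +
        (1/2 : ℂ) * pd (fun y => (cx (v t) y) ^ 2) x =
      (γ : ℂ) * pd (fun y => ((‖u t y‖ ^ 2 : ℝ) : ℂ)) x)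


open scoped FourierTransform NNReal ENNReal
open MeasureTheory Complex

lemma jb_nonneg' (x : ℝ) : 0 ≤ jb x := by
  have := abs_nonneg x
  simp only [jb]; linarith

lemma jb_continuous' : Continuous jb := by
  unfold jb; exact continuous_const.add continuous_abs

lemma norm_fourier'' (n : ℤ) (x : Torus) : ‖(fourier n x : ℂ)‖ = 1 := by
  rw [fourier_apply]
  exact Circle.norm_coe _

lemma fourierCoeff_fourier_eq' (m n : ℤ) :
    fourierCoeff (fun x : Torus => (fourier m x : ℂ)) n = if m = n then 1 else 0 := by
  have h2π : (0:ℝ) < 2 * π := by positivity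
  rw [fourierCoeff]
  have h1 : ∀ x : Torus, (fourier (-n) x : ℂ) • (fourier m x : ℂ) = fourier (-n + m) x := by
    intro x; rw [smul_eq_mul, ← fourier_add]
  simp_rw [h1]
  by_cases h : m = n
  · subst h
    simp_rw [neg_add_cancel]
    simp [fourier_zero]
  · rw [if_neg h]
    have hij : (-n + m : ℤ) ≠ 0 := fun hc => h (by omega)
    exact integral_eq_zero_of_add_right_eq_neg fun x =>
      fourier_add_half_inv_index hij h2π x

lemma fourierCoeff_tsum_fourier' (a : ℤ → ℂ) (ha : Summable fun m => ‖a m‖) (n : ℤ) :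
    fourierCoeff (fun x : Torus => ∑' m : ℤ, a m * fourier m x) n = a n := by
  rw [fourierCoeff]
  have h1 : (fun x : Torus => (fourier (-n) x : ℂ) • ∑' m : ℤ, a m * fourier m x)
      = fun x : Torus => ∑' m : ℤ, (fourier (-n) x : ℂ) * (a m * fourier m x) := by
    funext x; rw [smul_eq_mul, tsum_mul_left]
  rw [show (∫ t : Torus, (fourier (-n) t : ℂ) • (fun x : Torus => ∑' m : ℤ, a m * fourier m x) t
        ∂AddCircle.haarAddCircle)
      = ∫ x : Torus, ∑' m : ℤ, (fourier (-n) x : ℂ) * (a m * fourier m x)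
        ∂AddCircle.haarAddCircle from by rw [← h1]]
  rw [integral_tsum ?_ ?_]
  · have h2 : ∀ m : ℤ,
        (∫ x : Torus, (fourier (-n) x : ℂ) * (a m * fourier m x) ∂AddCircle.haarAddCircle)
          = a m * (if m = n then 1 else 0) := by
      intro m
      have h3 : (fun x : Torus => (fourier (-n) x : ℂ) * (a m * fourier m x))
          = fun x : Torus => a m * ((fourier (-n) x : ℂ) • ((fun y : Torus => (fourier m y : ℂ)) x)) := by
        funext x; rw [smul_eq_mul]; ring
      rw [h3, integral_const_mul, ← fourierCoeff, fourierCoeff_fourier_eq']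
    rw [tsum_congr h2, tsum_eq_single n ?_]
    · simp
    · intro m hm; simp [hm]
  · intro m
    exact ((map_continuous (fourier (-n))).mul
      (continuous_const.mul (map_continuous (fourier m)))).aestronglyMeasurable
  · have hpt : ∀ (m : ℤ) (x : Torus),
        (‖(fourier (-n) x : ℂ) * (a m * fourier m x)‖₊ : ℝ≥0) = ‖a m‖₊ := by
      intro m x
      apply NNReal.coe_injective
      simp [norm_mul, norm_fourier'', Circle.norm_coe]
    have h4 : ∀ m : ℤ,
        (∫⁻ x : Torus, ‖(fourier (-n) x : ℂ) * (a m * fourier m x)‖₊ ∂AddCircle.haarAddCircle)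
          = (‖a m‖₊ : ℝ≥0∞) := by
      intro m
      simp_rw [hpt m]
      simp [lintegral_const]
    simp only [enorm_eq_nnnorm]
    rw [tsum_congr h4]
    rw [ENNReal.tsum_coe_ne_top_iff_summable]
    rw [← NNReal.summable_coe]
    simpa using ha

lemma norm_exp_I_sq' (n : ℤ) (t : ℝ) :
    ‖Complex.exp (-(Complex.I * (n:ℂ)^2 * (t:ℂ)))‖ = 1 := by
  have h : -(Complex.I * (n:ℂ)^2 * (t:ℂ)) = Complex.I * (((-((n:ℝ)^2) * t : ℝ)) : ℂ) := by
    push_cast; ring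
  rw [Complex.norm_exp, h, Complex.mul_re, Complex.I_re, Complex.I_im,
    Complex.ofReal_re, Complex.ofReal_im]
  norm_num

lemma fourierCoeff_Ugrp' (u₀ : Torus → ℂ) (hs : Summable fun m => ‖fourierCoeff u₀ m‖)
    (t : ℝ) (n : ℤ) :
    fourierCoeff (Ugrp t u₀) n
      = Complex.exp (-(Complex.I * (n:ℂ)^2 * t)) * fourierCoeff u₀ n := by
  have := fourierCoeff_tsum_fourier'
    (fun m => Complex.exp (-(Complex.I * (m:ℂ)^2 * t)) * fourierCoeff u₀ m)
    (by
      apply hs.congr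
      intro m
      rw [norm_mul, norm_exp_I_sq', one_mul]) n
  exact this

lemma Ugrp_eq_zero' (u₀ : Torus → ℂ) (hs : ¬ Summable fun m => ‖fourierCoeff u₀ m‖)
    (t : ℝ) (x : Torus) : Ugrp t u₀ x = 0 := by
  apply tsum_eq_zero_of_not_summable
  intro hcon
  apply hs
  apply (summable_norm_iff.mpr hcon).congr
  intro m
  rw [norm_mul, norm_mul, norm_exp_I_sq', norm_fourier'', one_mul, mul_one]

lemma schwartz_decay_of_compactSupport' {f : ℝ → ℂ} (hf : ContDiff ℝ (⊤ : ℕ∞) f)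
    (hcs : HasCompactSupport f) (k n : ℕ) :
    ∃ C : ℝ, ∀ x : ℝ, ‖x‖ ^ k * ‖iteratedFDeriv ℝ n f x‖ ≤ C := by
  obtain ⟨R, hR⟩ := hcs.isCompact.isBounded.subset_closedBall 0
  obtain ⟨C, hC⟩ := (hcs.iteratedFDeriv n).exists_bound_of_continuous
    (hf.continuous_iteratedFDeriv (by exact_mod_cast le_top))
  refine ⟨(max R 1) ^ k * max C 0, fun x => ?_⟩
  by_cases hx : iteratedFDeriv ℝ n f x = 0
  · rw [hx, norm_zero, mul_zero]
    positivity
  · have hmem : x ∈ tsupport f :=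
      support_iteratedFDeriv_subset n (Function.mem_support.mpr hx)
    have hxR : ‖x‖ ≤ max R 1 := by
      have := hR hmem
      simp only [Metric.mem_closedBall, dist_zero_right] at this
      exact le_trans this (le_max_left _ _)
    exact mul_le_mul (pow_le_pow_left₀ (norm_nonneg _) hxR k)
      (le_trans (hC x) (le_max_left _ _)) (norm_nonneg _) (by positivity)

lemma sobNorm_nonneg' (s : ℝ) (u : Torus → ℂ) : 0 ≤ SobNorm s u :=
  Real.rpow_nonneg (tsum_nonneg fun n =>
    mul_nonneg (Real.rpow_nonneg (jb_nonneg' _) _) (by positivity)) _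

/-- **Homogeneous linear estimate for the Schrödinger group:**
`‖ψ(t) U(t) u₀‖_{X^k} ≲ ‖u₀‖_{H^k}`. -/
theorem linear_homogeneous_schrodinger (k : ℝ) (ψ : ℝ → ℝ) (hψ : IsBump ψ) :
    ∃ C > 0, ∀ u₀ : Torus → ℂ, MemSob k u₀ →
      XkNorm k (fun p => ((ψ p.2 : ℝ) : ℂ) * Ugrp p.2 u₀ p.1) ≤ C * SobNorm k u₀ := by
  classical
  obtain ⟨hsm, hpos, hsupp, hone⟩ := hψ
  have hsm' : ContDiff ℝ (⊤ : ℕ∞) (fun t : ℝ => ((ψ t : ℝ) : ℂ)) :=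
    Complex.ofRealCLM.contDiff.comp hsm
  have hcs : HasCompactSupport (fun t : ℝ => ((ψ t : ℝ) : ℂ)) := by
    apply HasCompactSupport.of_support_subset_isCompact (isCompact_Icc (a := (-2:ℝ)) (b := 2))
    intro t ht
    apply hsupp
    simp only [Function.mem_support] at ht ⊢
    intro h0
    exact ht (by rw [h0, Complex.ofReal_zero])
  let Ψ : SchwartzMap ℝ ℂ :=
    ⟨fun t => ((ψ t : ℝ) : ℂ), hsm'.of_le (by simp), schwartz_decay_of_compactSupport' hsm' hcs⟩
  let Φ : SchwartzMap ℝ ℂ := SchwartzMap.fourierTransformCLM ℝ Ψ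
  let G : ℝ → ℂ := fun σ => Φ (σ / (2 * π))
  have hπ : (π : ℝ) ≠ 0 := Real.pi_ne_zero
  have hGdef : ∀ σ : ℝ,
      (∫ t : ℝ, Complex.exp (-(Complex.I * (σ:ℂ) * (t:ℂ))) * ((ψ t : ℝ) : ℂ)) = G σ := by
    intro σ
    have h1 : G σ
        = ∫ t : ℝ, Complex.exp (((-2 * π * t * (σ / (2*π)) : ℝ) : ℂ) * Complex.I) • Ψ t := by
      show Φ (σ / (2*π)) = _
      rw [show (Φ : ℝ → ℂ) = 𝓕 (⇑Ψ) from rfl]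
      exact Real.fourier_real_eq_integral_exp_smul (⇑Ψ) (σ / (2*π))
    rw [h1]
    congr 1
    funext t
    rw [smul_eq_mul]
    have h2 : (-2) * π * t * (σ / (2*π)) = -(σ * t) := by field_simp
    have h3 : Ψ t = ((ψ t : ℝ) : ℂ) := rfl
    rw [h2, h3]
    congr 1
    push_cast
    ring
  obtain ⟨C0, hC0pos, hC0⟩ := Φ.decay 0 0
  obtain ⟨C2, hC2pos, hC2⟩ := Φ.decay 2 0
  have hC0' : ∀ x : ℝ, ‖Φ x‖ ≤ C0 := by
    intro x; have := hC0 x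
    simpa [norm_iteratedFDeriv_zero] using this
  have hC2' : ∀ x : ℝ, x^2 * ‖Φ x‖ ≤ C2 := by
    intro x; have := hC2 x
    simpa [norm_iteratedFDeriv_zero, Real.norm_eq_abs, _root_.sq_abs] using this
  set Cg : ℝ := C0 + 4 * π^2 * C2 with hCgdef
  have hCg0 : 0 < Cg := by
    have h4 : (0:ℝ) < 4 * π^2 := by positivity
    nlinarith
  have hGb : ∀ σ : ℝ, ‖G σ‖ * (1 + σ^2) ≤ Cg := by
    intro σ
    have h0 := hC0' (σ / (2*π))
    have h2 := hC2' (σ / (2*π))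
    have hy : (σ / (2*π))^2 * (4*π^2) = σ^2 := by
      rw [div_pow, show ((2*π):ℝ)^2 = 4*π^2 from by ring, div_mul_cancel₀]
      exact ne_of_gt (by positivity)
    have h3 : σ^2 * ‖Φ (σ / (2*π))‖ ≤ 4*π^2 * C2 := by
      have h4 : (0:ℝ) ≤ 4*π^2 := by positivity
      calc σ^2 * ‖Φ (σ / (2*π))‖
          = 4*π^2 * ((σ / (2*π))^2 * ‖Φ (σ / (2*π))‖) := by rw [← hy]; ring
        _ ≤ 4*π^2 * C2 := by
            apply mul_le_mul_of_nonneg_left _ h4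
            calc (σ / (2*π))^2 * ‖Φ (σ / (2*π))‖ = ‖(σ / (2*π))‖^2 * ‖Φ (σ / (2*π))‖ := by
                  rw [Real.norm_eq_abs, _root_.sq_abs]
              _ ≤ C2 := by
                  have := hC2 (σ / (2*π))
                  simpa [norm_iteratedFDeriv_zero] using this
    have hGΦ : ‖G σ‖ = ‖Φ (σ / (2*π))‖ := rfl
    rw [hGΦ]
    nlinarith [norm_nonneg (Φ (σ / (2*π)))]
  have hGcont : Continuous G := Φ.continuous.comp (continuous_id.div_const (2*π))
  have hGle : ∀ σ : ℝ, ‖G σ‖ ≤ Cg * (1 + σ^2)⁻¹ := by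
    intro σ
    have h1 : (0:ℝ) < 1 + σ^2 := by positivity
    rw [← div_eq_mul_inv, le_div_iff₀ h1]
    exact hGb σ
  have hintG : Integrable (fun σ : ℝ => ‖G σ‖) := by
    refine (integrable_inv_one_add_sq.const_mul Cg).mono' hGcont.norm.aestronglyMeasurable ?_
    filter_upwards with σ
    rw [norm_norm]
    exact hGle σ
  have hHf0 : ∀ σ : ℝ, 0 ≤ jb σ * ‖G σ‖^2 := fun σ =>
    mul_nonneg (jb_nonneg' σ) (by positivity)
  have hHfcont : Continuous (fun σ : ℝ => jb σ * ‖G σ‖^2) :=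
    jb_continuous'.mul ((hGcont.norm).pow 2)
  have hHfint : Integrable (fun σ : ℝ => jb σ * ‖G σ‖^2) := by
    refine (integrable_inv_one_add_sq.const_mul (2 * Cg^2)).mono'
      hHfcont.aestronglyMeasurable ?_
    filter_upwards with σ
    rw [Real.norm_of_nonneg (hHf0 σ)]
    have h1 : (0:ℝ) < 1 + σ^2 := by positivity
    rw [← div_eq_mul_inv, le_div_iff₀ h1]
    have hb := hGb σ
    have ha := norm_nonneg (G σ)
    have habs : jb σ ≤ 2 * (1 + σ^2) := by
      simp only [jb]
      nlinarith [abs_nonneg σ, _root_.sq_abs σ]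
    nlinarith [mul_self_le_mul_self (mul_nonneg ha h1.le) hb,
      mul_le_mul_of_nonneg_right habs (mul_nonneg (sq_nonneg ‖G σ‖) h1.le),
      mul_nonneg (mul_nonneg ha h1.le) ha]
  set A2 : ℝ := ∫ σ : ℝ, jb σ * ‖G σ‖^2 with hA2def
  have hA20 : 0 ≤ A2 := integral_nonneg hHf0
  set B : ℝ := ∫ σ : ℝ, ‖G σ‖ with hBdef
  have hB0 : 0 ≤ B := integral_nonneg fun σ => norm_nonneg _
  have hA2half : 0 ≤ A2 ^ (1/2:ℝ) := Real.rpow_nonneg hA20 _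
  refine ⟨A2 ^ (1/2:ℝ) + B + 1, by linarith, fun u₀ hmem => ?_⟩
  have hS0 : 0 ≤ SobNorm k u₀ := sobNorm_nonneg' k u₀
  by_cases hs : Summable fun m => ‖fourierCoeff u₀ m‖
  · -- main case: the series defining `Ugrp` converges absolutely
    have hcoeff : ∀ (t : ℝ) (n : ℤ),
        fourierCoeff (fun x : Torus => ((ψ t : ℝ) : ℂ) * Ugrp t u₀ x) n
          = ((ψ t : ℝ) : ℂ) * (Complex.exp (-(Complex.I * (n:ℂ)^2 * t)) * fourierCoeff u₀ n) := by
      intro t n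
      rw [fourierCoeff.const_mul (Ugrp t u₀) (((ψ t : ℝ) : ℂ)) n, fourierCoeff_Ugrp' u₀ hs t n]
    have hstFT : ∀ (n : ℤ) (τ : ℝ),
        stFT (fun p => ((ψ p.2 : ℝ) : ℂ) * Ugrp p.2 u₀ p.1) n τ
          = fourierCoeff u₀ n * G (τ + (n:ℝ)^2) := by
      intro n τ
      simp only [stFT]
      calc (∫ t : ℝ, Complex.exp (-(Complex.I * (τ:ℂ) * (t:ℂ))) *
              fourierCoeff (fun x : Torus => ((ψ t : ℝ) : ℂ) * Ugrp t u₀ x) n)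
          = ∫ t : ℝ, fourierCoeff u₀ n *
              (Complex.exp (-(Complex.I * ((τ + (n:ℝ)^2 : ℝ) : ℂ) * (t:ℂ))) * ((ψ t : ℝ) : ℂ)) := by
            congr 1
            funext t
            rw [hcoeff t n]
            have he : Complex.exp (-(Complex.I * ((τ + (n:ℝ)^2 : ℝ) : ℂ) * (t:ℂ)))
                = Complex.exp (-(Complex.I * (τ:ℂ) * (t:ℂ))) *
                  Complex.exp (-(Complex.I * (n:ℂ)^2 * (t:ℂ))) := by
              rw [← Complex.exp_add]
              congr 1
              push_cast
              ring
            rw [he]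
            ring
        _ = fourierCoeff u₀ n * G (τ + (n:ℝ)^2) := by
            rw [integral_const_mul, hGdef (τ + (n:ℝ)^2)]
    have hc0 : ∀ n : ℤ, 0 ≤ jb (n:ℝ) ^ (2*k) * ‖fourierCoeff u₀ n‖^2 := fun n =>
      mul_nonneg (Real.rpow_nonneg (jb_nonneg' _) _) (by positivity)
    have hT0 : 0 ≤ ∑' n : ℤ, jb (n:ℝ) ^ (2*k) * ‖fourierCoeff u₀ n‖^2 := tsum_nonneg hc0
    have hmeasn : ∀ n : ℤ, AEStronglyMeasurable
        (fun τ : ℝ => (jb (n:ℝ) ^ (2*k) * ‖fourierCoeff u₀ n‖^2) *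
          (jb (τ + (n:ℝ)^2) * ‖G (τ + (n:ℝ)^2)‖^2)) volume := by
      intro n
      exact (continuous_const.mul
        (hHfcont.comp (continuous_add_right ((n:ℝ)^2)))).aestronglyMeasurable
    have hfin : (∑' n : ℤ, ∫⁻ τ : ℝ, ‖(jb (n:ℝ) ^ (2*k) * ‖fourierCoeff u₀ n‖^2) *
          (jb (τ + (n:ℝ)^2) * ‖G (τ + (n:ℝ)^2)‖^2)‖₊) ≠ ⊤ := by
      have h5 : ∀ n : ℤ, (∫⁻ τ : ℝ, ‖(jb (n:ℝ) ^ (2*k) * ‖fourierCoeff u₀ n‖^2) *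
            (jb (τ + (n:ℝ)^2) * ‖G (τ + (n:ℝ)^2)‖^2)‖₊)
          = ENNReal.ofReal (jb (n:ℝ) ^ (2*k) * ‖fourierCoeff u₀ n‖^2) *
            ∫⁻ σ : ℝ, ENNReal.ofReal (jb σ * ‖G σ‖^2) := by
        intro n
        have h6 : ∀ τ : ℝ, (‖(jb (n:ℝ) ^ (2*k) * ‖fourierCoeff u₀ n‖^2) *
              (jb (τ + (n:ℝ)^2) * ‖G (τ + (n:ℝ)^2)‖^2)‖₊ : ℝ≥0∞)
            = ENNReal.ofReal (jb (n:ℝ) ^ (2*k) * ‖fourierCoeff u₀ n‖^2) *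
              ENNReal.ofReal (jb (τ + (n:ℝ)^2) * ‖G (τ + (n:ℝ)^2)‖^2) := by
          intro τ
          rw [← ENNReal.ofReal_mul (hc0 n), ← enorm_eq_nnnorm, ← ofReal_norm,
            Real.norm_of_nonneg (mul_nonneg (hc0 n) (hHf0 _))]
        simp_rw [h6]
        rw [lintegral_const_mul' _ _ ENNReal.ofReal_ne_top]
        congr 1
        exact lintegral_add_right_eq_self (fun σ => ENNReal.ofReal (jb σ * ‖G σ‖^2)) ((n:ℝ)^2)
      rw [tsum_congr h5, ENNReal.tsum_mul_right]
      apply ENNReal.mul_ne_top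
      · rw [← ENNReal.ofReal_tsum_of_nonneg hc0 hmem]
        exact ENNReal.ofReal_ne_top
      · exact hHfint.lintegral_lt_top.ne
    have hswap : (∫ τ : ℝ, ∑' n : ℤ, jb (n:ℝ) ^ (2*k) * jb (τ + (n:ℝ)^2) ^ (2 * (1/2:ℝ)) *
          ‖stFT (fun p => ((ψ p.2 : ℝ) : ℂ) * Ugrp p.2 u₀ p.1) n τ‖^2)
        = (∑' n : ℤ, jb (n:ℝ) ^ (2*k) * ‖fourierCoeff u₀ n‖^2) * A2 := by
      calc (∫ τ : ℝ, ∑' n : ℤ, jb (n:ℝ) ^ (2*k) * jb (τ + (n:ℝ)^2) ^ (2 * (1/2:ℝ)) *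
            ‖stFT (fun p => ((ψ p.2 : ℝ) : ℂ) * Ugrp p.2 u₀ p.1) n τ‖^2)
          = ∫ τ : ℝ, ∑' n : ℤ, (jb (n:ℝ) ^ (2*k) * ‖fourierCoeff u₀ n‖^2) *
              (jb (τ + (n:ℝ)^2) * ‖G (τ + (n:ℝ)^2)‖^2) := by
            congr 1
            funext τ
            apply tsum_congr
            intro n
            rw [hstFT n τ, show (2 * (1/2:ℝ)) = 1 from by norm_num, Real.rpow_one,
              norm_mul, mul_pow]
            ring
        _ = ∑' n : ℤ, ∫ τ : ℝ, (jb (n:ℝ) ^ (2*k) * ‖fourierCoeff u₀ n‖^2) *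
              (jb (τ + (n:ℝ)^2) * ‖G (τ + (n:ℝ)^2)‖^2) := integral_tsum hmeasn hfin
        _ = ∑' n : ℤ, (jb (n:ℝ) ^ (2*k) * ‖fourierCoeff u₀ n‖^2) * A2 := by
            apply tsum_congr
            intro n
            rw [integral_const_mul]
            congr 1
            exact integral_add_right_eq_self (fun σ => jb σ * ‖G σ‖^2) ((n:ℝ)^2)
        _ = (∑' n : ℤ, jb (n:ℝ) ^ (2*k) * ‖fourierCoeff u₀ n‖^2) * A2 := tsum_mul_right
    have hXval : Xnorm k (1/2) (fun p => ((ψ p.2 : ℝ) : ℂ) * Ugrp p.2 u₀ p.1)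
        = A2 ^ (1/2:ℝ) * SobNorm k u₀ := by
      simp only [Xnorm, SobNorm]
      rw [hswap, Real.mul_rpow hT0 hA20]
      ring
    have hXLLval : XLL k (fun p => ((ψ p.2 : ℝ) : ℂ) * Ugrp p.2 u₀ p.1)
        = B * SobNorm k u₀ := by
      simp only [XLL, SobNorm]
      have h7 : ∀ n : ℤ,
          (jb (n:ℝ) ^ k * ∫ τ : ℝ, ‖stFT (fun p => ((ψ p.2 : ℝ) : ℂ) * Ugrp p.2 u₀ p.1) n τ‖)^2
            = (jb (n:ℝ) ^ (2*k) * ‖fourierCoeff u₀ n‖^2) * B^2 := by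
        intro n
        have h8 : (∫ τ : ℝ, ‖stFT (fun p => ((ψ p.2 : ℝ) : ℂ) * Ugrp p.2 u₀ p.1) n τ‖)
            = ‖fourierCoeff u₀ n‖ * B := by
          calc (∫ τ : ℝ, ‖stFT (fun p => ((ψ p.2 : ℝ) : ℂ) * Ugrp p.2 u₀ p.1) n τ‖)
              = ∫ τ : ℝ, ‖fourierCoeff u₀ n‖ * ‖G (τ + (n:ℝ)^2)‖ := by
                congr 1
                funext τ
                rw [hstFT n τ, norm_mul]
            _ = ‖fourierCoeff u₀ n‖ * ∫ τ : ℝ, ‖G (τ + (n:ℝ)^2)‖ := integral_const_mul _ _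
            _ = ‖fourierCoeff u₀ n‖ * B := by
                congr 1
                exact integral_add_right_eq_self (fun σ => ‖G σ‖) ((n:ℝ)^2)
        rw [h8]
        have h9 : (jb (n:ℝ) ^ k)^2 = jb (n:ℝ) ^ (2*k) := by
          rw [← Real.rpow_natCast (jb (n:ℝ) ^ k) 2, ← Real.rpow_mul (jb_nonneg' _)]
          congr 1
          push_cast
          ring
        calc (jb (n:ℝ) ^ k * (‖fourierCoeff u₀ n‖ * B))^2
            = (jb (n:ℝ) ^ k)^2 * ‖fourierCoeff u₀ n‖^2 * B^2 := by ring
          _ = (jb (n:ℝ) ^ (2*k) * ‖fourierCoeff u₀ n‖^2) * B^2 := by rw [h9]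
      rw [tsum_congr h7, tsum_mul_right, Real.mul_rpow hT0 (sq_nonneg B)]
      rw [show ((B^2 : ℝ)) ^ (1/2:ℝ) = B from by
        rw [← Real.rpow_natCast B 2, ← Real.rpow_mul hB0]
        norm_num]
      ring
    simp only [XkNorm]
    rw [hXval, hXLLval]
    nlinarith
  · -- degenerate case: the series defining `Ugrp` is identically zero
    have hstFT0 : ∀ (n : ℤ) (τ : ℝ),
        stFT (fun p => ((ψ p.2 : ℝ) : ℂ) * Ugrp p.2 u₀ p.1) n τ = 0 := by
      intro n τ
      simp only [stFT]
      have h1 : ∀ t : ℝ,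
          fourierCoeff (fun x : Torus => ((ψ t : ℝ) : ℂ) * Ugrp t u₀ x) n = 0 := by
        intro t
        have h2 : (fun x : Torus => ((ψ t : ℝ) : ℂ) * Ugrp t u₀ x) = fun _ : Torus => (0:ℂ) := by
          funext x
          rw [Ugrp_eq_zero' u₀ hs t x, mul_zero]
        rw [h2]
        simp [fourierCoeff]
      simp_rw [h1]
      simp
    have hzeroX : XkNorm k (fun p => ((ψ p.2 : ℝ) : ℂ) * Ugrp p.2 u₀ p.1) = 0 := by
      simp only [XkNorm, Xnorm, XLL]
      simp_rw [hstFT0]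
      simp [Real.zero_rpow (by norm_num : (1/2:ℝ) ≠ 0)]
    rw [hzeroX]
    nlinarith

end
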